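/- arXiv:1910.06533 — 2 statements merged into one kernel-verified Lean document; each statement's English description precedes it below -/
import Mathlib

section
/- Suppose the ruled strip f(t,v) = c(t) + v ξ(t) is developable. Then the mean curvature of f along the curve c, H_f(t) := (L(t) G(t) − 2 M(t) F(t) + N(t) E(t)) / (2 (E(t) G(t) − F(t)²)) computed from the first fundamental form coefficients E = 1, F = cos β, G = 1 and second fundamental form coefficients L = −κ sin α, M = 0, N = 0 at v = 0, satisfies H_f(t) = −κ(t) sin α(t) / (2 sin² β(t)) = −(κ(t)² sin² α(t) + (α'(t) + τ(t))²) / (2 κ(t) sin α(t)) for all t ∈ I; in particular H_f has no zeros on I. -/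
noncomputable section
open Real Set
open scoped ContDiff

local notation "⟪" x ", " y "⟫" => @inner ℝ _ _ x y

/-- Euclidean 3-space. -/
abbrev E3 := EuclideanSpace ℝ (Fin 3)

/-- The vector (cross) product of `ℝ³`. -/
def cross3 (u v : E3) : E3 :=
  (WithLp.equiv 2 (Fin 3 → ℝ)).symm
    ![u 1 * v 2 - u 2 * v 1, u 2 * v 0 - u 0 * v 2, u 0 * v 1 - u 1 * v 0]

/-!
Write the ruling in the Frenet frame as `ξ = x e + y n + z b` with `x = cos β`,
`y = sin β cos α`, `z = sin β sin α`. Since `e × ξ = y b - z n`, the Frenet equations give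
`det(c', ξ, ξ') = ⟪e × ξ, ξ'⟫ = y z' - z y' + (y² + z²) τ - κ x z`,
which is `sin β (sin β (α' + τ) - κ sin α cos β)`.
Developability is therefore `sin β (α' + τ) = κ sin α cos β`, and squaring this and using
`sin² β + cos² β = 1` turns `-κ sin α / (2 sin² β)` into `-(κ² sin² α + (α' + τ)²) / (2 κ sin α)`.
-/

section CrossProduct

open Matrix

lemma cross3_eq_crossProduct (u v : E3) : cross3 u v = WithLp.toLp 2 (u.ofLp ⨯₃ v.ofLp) := rfl

lemma inner_eq_dotProduct (u v : E3) : ⟪u, v⟫ = u.ofLp ⬝ᵥ v.ofLp := by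
  simp [EuclideanSpace.inner_eq_star_dotProduct, dotProduct_comm]

lemma isBilinearMap_cross3 : IsBilinearMap ℝ cross3 where
  add_left u v w := by simp [cross3_eq_crossProduct]
  smul_left r u v := by simp [cross3_eq_crossProduct]
  add_right u v w := by simp [cross3_eq_crossProduct]
  smul_right r u v := by simp [cross3_eq_crossProduct]

@[simp] lemma cross3_self (u : E3) : cross3 u u = 0 := by
  simp [cross3_eq_crossProduct, cross_self]

@[simp] lemma inner_self_cross3 (u v : E3) : ⟪u, cross3 u v⟫ = 0 := by
  simp [inner_eq_dotProduct, cross3_eq_crossProduct, dot_self_cross]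

@[simp] lemma inner_cross3_self (u v : E3) : ⟪v, cross3 u v⟫ = 0 := by
  simp [inner_eq_dotProduct, cross3_eq_crossProduct, dot_cross_self]

lemma inner_cross3_perm (u v w : E3) : ⟪u, cross3 v w⟫ = ⟪v, cross3 w u⟫ := by
  simp [inner_eq_dotProduct, cross3_eq_crossProduct, triple_product_permutation u]

lemma cross3_anticomm (u v : E3) : -cross3 u v = cross3 v u := by
  simp [cross3_eq_crossProduct, ← WithLp.toLp_neg, cross_anticomm]

lemma inner_cross3_cross3 (u v w x : E3) :
    ⟪cross3 u v, cross3 w x⟫ = ⟪u, w⟫ * ⟪v, x⟫ - ⟪u, x⟫ * ⟪v, w⟫ := by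
  simp [inner_eq_dotProduct, cross3_eq_crossProduct, cross_dot_cross]

lemma cross3_cross3_self (u v : E3) : cross3 u (cross3 u v) = ⟪u, v⟫ • u - ⟪u, u⟫ • v := by
  simp only [inner_eq_dotProduct, cross3_eq_crossProduct, cross_cross_eq_smul_sub_smul']
  rfl

lemma HasDerivAt.cross3 {u v : ℝ → E3} {u' v' : E3} {t : ℝ} (hu : HasDerivAt u u' t)
    (hv : HasDerivAt v v' t) :
    HasDerivAt (fun s => cross3 (u s) (v s)) (cross3 (u t) v' + cross3 u' (v t)) t :=
  isBilinearMap_cross3.toContinuousBilinearMap.hasDerivAt_of_bilinear (fun _ => hu) (fun _ => hv)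

end CrossProduct

lemma inner_deriv_self_eq_zero_of_norm_eqOn {F : Type*} [NormedAddCommGroup F]
    [InnerProductSpace ℝ F] {f : ℝ → F} {s : Set ℝ} {t r : ℝ} (hs : UniqueDiffWithinAt ℝ s t)
    (ht : t ∈ s) (hf : DifferentiableAt ℝ f t) (hr : ∀ x ∈ s, ‖f x‖ = r) :
    ⟪deriv f t, f t⟫ = 0 := by
  have hsq : ∀ x ∈ s, ⟪f x, f x⟫ = r ^ 2 := fun x hx => by
    rw [real_inner_self_eq_norm_sq, hr x hx]
  have h := hs.eq_deriv _ (hf.hasDerivAt.inner ℝ hf.hasDerivAt).hasDerivWithinAt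
    ((hasDerivWithinAt_const t s (r ^ 2)).congr hsq (hsq t ht))
  linarith [real_inner_comm (f t) (deriv f t)]

section UnitSpeedCurve

variable {a b : ℝ} {c : ℝ → E3} {κ : ℝ → ℝ} {n : ℝ → E3} {t : ℝ}

lemma deriv_deriv_eq_smul_normal (hκt : κ t ≠ 0)
    (hn : n t = (κ t)⁻¹ • deriv (deriv c) t) : deriv (deriv c) t = κ t • n t := by
  rw [hn, smul_inv_smul₀ hκt]

lemma norm_normal_eq_one (hκ : κ t = ‖deriv (deriv c) t‖) (hκt : 0 < κ t)
    (hn : n t = (κ t)⁻¹ • deriv (deriv c) t) : ‖n t‖ = 1 := by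
  rw [hn, norm_smul, ← hκ, norm_inv, Real.norm_of_nonneg hκt.le, inv_mul_cancel₀ hκt.ne']

lemma inner_normal_deriv_eq_zero (hab : a < b) (hc : Differentiable ℝ (deriv c))
    (harc : ∀ s ∈ Icc a b, ‖deriv c s‖ = 1) (ht : t ∈ Icc a b)
    (hn : n t = (κ t)⁻¹ • deriv (deriv c) t) : ⟪n t, deriv c t⟫ = 0 := by
  rw [hn, real_inner_smul_left,
    inner_deriv_self_eq_zero_of_norm_eqOn (uniqueDiffOn_Icc hab t ht) ht (hc t) harc, mul_zero]

lemma differentiableAt_normal (hκ : ∀ s, κ s = ‖deriv (deriv c) s‖) (hκt : 0 < κ t)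
    (hn : ∀ s, n s = (κ s)⁻¹ • deriv (deriv c) s)
    (hc : DifferentiableAt ℝ (deriv (deriv c)) t) : DifferentiableAt ℝ n t := by
  have hc0 : deriv (deriv c) t ≠ 0 := fun h => by simp [hκ t, h] at hκt
  rw [funext hn, funext hκ]
  exact ((hc.norm ℝ hc0).inv (norm_ne_zero_iff.mpr hc0)).smul hc

end UnitSpeedCurve

-- `N'` and `e × N'` stand for `n'` and `b' = e' × n + e × n'`, where `e' × n = κ n × n = 0`.
lemma inner_cross3_frenet_combination {e n N' : E3} {κ : ℝ} (x y z x' y' z' : ℝ)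
    (hee : ⟪e, e⟫ = 1) (hne : ⟪n, e⟫ = 0) (hnn : ⟪n, n⟫ = 1) (hN'n : ⟪N', n⟫ = 0) :
    ⟪cross3 e (x • e + y • n + z • cross3 e n),
      (x • (κ • n) + x' • e) + (y • N' + y' • n) + (z • cross3 e N' + z' • cross3 e n)⟫ =
      y * z' - z * y' + (y ^ 2 + z ^ 2) * ⟪N', cross3 e n⟫ - κ * x * z := by
  have hen : ⟪e, n⟫ = 0 := by rw [real_inner_comm, hne]
  have hcross : cross3 e (x • e + y • n + z • cross3 e n) = y • cross3 e n - z • n := by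
    simp only [isBilinearMap_cross3.add_right, isBilinearMap_cross3.smul_right, cross3_self,
      cross3_cross3_self, hen, hee]
    module
  have hbN' : ⟪cross3 e n, cross3 e N'⟫ = 0 := by
    rw [inner_cross3_cross3, hee, real_inner_comm, hN'n, hne]; ring
  have hnN' : ⟪n, cross3 e N'⟫ = -⟪N', cross3 e n⟫ := by
    rw [inner_cross3_perm, inner_cross3_perm, ← cross3_anticomm, inner_neg_right]
  have hbb : ⟪cross3 e n, cross3 e n⟫ = 1 := by
    rw [inner_cross3_cross3, hee, hnn, hen, hne]; ring
  rw [hcross]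
  simp only [inner_add_right, inner_sub_left, real_inner_smul_left, real_inner_smul_right,
    inner_self_cross3, inner_cross3_self, real_inner_comm e (cross3 e n),
    real_inner_comm n (cross3 e n), real_inner_comm N' (cross3 e n), real_inner_comm N' n, hne,
    hnn, hN'n, hbN', hnN', hbb]
  ring

lemma sin_mul_deriv_add_torsion_eq_of_developable {a b t : ℝ} (hab : a < b) (ht : t ∈ Icc a b)
    {c : ℝ → E3} (hc : ContDiff ℝ 3 c) (harc : ∀ s ∈ Icc a b, ‖deriv c s‖ = 1)
    {κ : ℝ → ℝ} (hκ : ∀ s, κ s = ‖deriv (deriv c) s‖) (hκpos : ∀ s ∈ Icc a b, 0 < κ s)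
    {n : ℝ → E3} (hn : ∀ s, n s = (κ s)⁻¹ • deriv (deriv c) s)
    {α β : ℝ → ℝ} (hα : DifferentiableAt ℝ α t) (hβ : DifferentiableAt ℝ β t)
    (hβt : sin (β t) ≠ 0) {ξ : ℝ → E3}
    (hξ : ∀ s, ξ s = cos (β s) • deriv c s +
      sin (β s) • (cos (α s) • n s + sin (α s) • cross3 (deriv c s) (n s)))
    (hdev : ⟪cross3 (deriv c t) (ξ t), deriv ξ t⟫ = 0) :
    sin (β t) * (deriv α t + ⟪deriv n t, cross3 (deriv c t) (n t)⟫) =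
      κ t * sin (α t) * cos (β t) := by
  have hc1 : ContDiff ℝ 2 (deriv c) := (contDiff_succ_iff_deriv.mp hc).2.2
  have hc2 : ContDiff ℝ 1 (deriv (deriv c)) := (contDiff_succ_iff_deriv.mp hc1).2.2
  have hκt := hκpos t ht
  have hcD : HasDerivAt (deriv c) (κ t • n t) t := by
    rw [← deriv_deriv_eq_smul_normal hκt.ne' (hn t)]
    exact (hc1.differentiable (by simp) t).hasDerivAt
  have hnD : HasDerivAt n (deriv n t) t :=
    (differentiableAt_normal hκ hκt hn (hc2.differentiable (by simp) t)).hasDerivAt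
  have hbD :
      HasDerivAt (fun s => cross3 (deriv c s) (n s)) (cross3 (deriv c t) (deriv n t)) t := by
    simpa [isBilinearMap_cross3.smul_left] using hcD.cross3 hnD
  have hξ' : ξ = fun s => cos (β s) • deriv c s + (sin (β s) * cos (α s)) • n s +
      (sin (β s) * sin (α s)) • cross3 (deriv c s) (n s) := by
    ext1 s; rw [hξ]; module
  have hξD := ((hβ.hasDerivAt.cos.fun_smul hcD).fun_add
    ((hβ.hasDerivAt.sin.fun_mul hα.hasDerivAt.cos).fun_smul hnD)).fun_add
    ((hβ.hasDerivAt.sin.fun_mul hα.hasDerivAt.sin).fun_smul hbD)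
  rw [← hξ'] at hξD
  have hnorm : ∀ s ∈ Icc a b, ‖n s‖ = 1 := fun s hs => norm_normal_eq_one (hκ s) (hκpos s hs) (hn s)
  have hee : ⟪deriv c t, deriv c t⟫ = 1 := by rw [real_inner_self_eq_norm_sq, harc t ht, one_pow]
  have hne : ⟪n t, deriv c t⟫ = 0 :=
    inner_normal_deriv_eq_zero hab (hc1.differentiable (by simp)) harc ht (hn t)
  have hnn : ⟪n t, n t⟫ = 1 := by rw [real_inner_self_eq_norm_sq, hnorm t ht, one_pow]
  have hN'n : ⟪deriv n t, n t⟫ = 0 :=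
    inner_deriv_self_eq_zero_of_norm_eqOn (uniqueDiffOn_Icc hab t ht) ht hnD.differentiableAt hnorm
  rw [hξD.deriv, hξ', inner_cross3_frenet_combination _ _ _ _ _ _ hee hne hnn hN'n] at hdev
  refine mul_left_cancel₀ hβt ?_
  linear_combination hdev - sin (β t) ^ 2 * (deriv α t + ⟪deriv n t, cross3 (deriv c t) (n t)⟫) *
    sin_sq_add_cos_sq (α t)

lemma neg_mul_div_two_sin_sq_eq {k s w θ : ℝ} (hk : k ≠ 0) (hs : s ≠ 0) (hθ : sin θ ≠ 0)
    (h : sin θ * w = k * s * cos θ) :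
    -(k * s) / (2 * sin θ ^ 2) = -(k ^ 2 * s ^ 2 + w ^ 2) / (2 * k * s) := by
  rw [div_eq_div_iff (by positivity) (by positivity)]
  linear_combination 2 * (sin θ * w + k * s * cos θ) * h + 2 * k ^ 2 * s ^ 2 * sin_sq_add_cos_sq θ

lemma sin_ne_zero_of_abs_lt_pi {x : ℝ} (hx0 : x ≠ 0) (hx : |x| < π) : sin x ≠ 0 := by
  rwa [Ne, sin_eq_zero_iff_of_lt_of_lt (neg_lt_of_abs_lt hx) (lt_of_abs_lt hx)]

theorem stmt4_general (a b : ℝ) (hab : a < b)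
    (c : ℝ → E3) (hc : ContDiff ℝ ∞ c)
    (harc : ∀ t ∈ Icc a b, ‖deriv c t‖ = 1)
    (κ : ℝ → ℝ) (hκ : ∀ t, κ t = ‖deriv (deriv c) t‖)
    (hκpos : ∀ t ∈ Icc a b, 0 < κ t)
    (e n bi : ℝ → E3) (τ : ℝ → ℝ)
    (he : ∀ t, e t = deriv c t)
    (hn : ∀ t, n t = (κ t)⁻¹ • deriv (deriv c) t)
    (hbi : ∀ t, bi t = cross3 (e t) (n t))
    (hτ : ∀ t, τ t = ⟪deriv n t, bi t⟫)
    (α β : ℝ → ℝ) (hα : ContDiff ℝ ∞ α) (hβ : ContDiff ℝ ∞ β)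
    (hα1 : ∀ t ∈ Icc a b, 0 < |α t| ∧ |α t| < π / 2)
    (hβ1 : ∀ t ∈ Icc a b, 0 < β t ∧ β t < π)
    (ξ : ℝ → E3)
    (hξ : ∀ t, ξ t = cos (β t) • e t +
      sin (β t) • (cos (α t) • n t + sin (α t) • bi t))
    (hdev : ∀ t ∈ Icc a b, ⟪cross3 (deriv c t) (ξ t), deriv ξ t⟫ = 0)
    (H : ℝ → ℝ)
    (hH : ∀ t, H t = ((-(κ t * sin (α t))) * 1 - 2 * 0 * cos (β t) + 0 * 1) /
      (2 * (1 * 1 - cos (β t) ^ 2))) :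
    ∀ t ∈ Icc a b,
      H t = -(κ t * sin (α t)) / (2 * sin (β t) ^ 2) ∧
      H t = -((κ t) ^ 2 * sin (α t) ^ 2 + (deriv α t + τ t) ^ 2) /
        (2 * κ t * sin (α t)) ∧
      H t ≠ 0 := by
  intro t ht
  obtain rfl : e = deriv c := funext he
  obtain rfl : bi = fun s => cross3 (deriv c s) (n s) := funext hbi
  have hκt := hκpos t ht
  have hsβ : 0 < sin (β t) := sin_pos_of_pos_of_lt_pi (hβ1 t ht).1 (hβ1 t ht).2
  have hsα : sin (α t) ≠ 0 := sin_ne_zero_of_abs_lt_pi (abs_pos.mp (hα1 t ht).1)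
    ((hα1 t ht).2.trans (half_lt_self pi_pos))
  have hH' : H t = -(κ t * sin (α t)) / (2 * sin (β t) ^ 2) := by rw [hH, sin_sq]; ring
  have hkey : sin (β t) * (deriv α t + τ t) = κ t * sin (α t) * cos (β t) := by
    rw [hτ]
    exact sin_mul_deriv_add_torsion_eq_of_developable hab ht (hc.of_le (by norm_cast)) harc hκ
      hκpos hn (hα.differentiable (by simp) t) (hβ.differentiable (by simp) t) hsβ.ne' hξ
      (hdev t ht)
  refine ⟨hH', hH'.trans (neg_mul_div_two_sin_sq_eq hκt.ne' hsα hsβ.ne' hkey), ?_⟩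
  rw [hH']
  exact div_ne_zero (neg_ne_zero.mpr (mul_ne_zero hκt.ne' hsα)) (by positivity)

/-- the mean curvature of a developable strip along the curve,
computed via `H = (LG - 2MF + NE)/(2(EG - F²))` from `E = 1`, `F = cos β`, `G = 1`,
`L = -κ sin α`, `M = N = 0`, satisfies
`H = -κ sin α/(2 sin² β) = -(κ² sin² α + (α' + τ)²)/(2 κ sin α)`;
in particular `H` has no zeros on `I`. -/
theorem stmt4 (a b : ℝ) (hab : a < b)
    (c : ℝ → E3) (hc : ContDiff ℝ ∞ c) (hinj : InjOn c (Icc a b))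
    (harc : ∀ t ∈ Icc a b, ‖deriv c t‖ = 1)
    (κ : ℝ → ℝ) (hκ : ∀ t, κ t = ‖deriv (deriv c) t‖)
    (hκpos : ∀ t ∈ Icc a b, 0 < κ t)
    (e n bi : ℝ → E3) (τ : ℝ → ℝ)
    (he : ∀ t, e t = deriv c t)
    (hn : ∀ t, n t = (κ t)⁻¹ • deriv (deriv c) t)
    (hbi : ∀ t, bi t = cross3 (e t) (n t))
    (hτ : ∀ t, τ t = ⟪deriv n t, bi t⟫)
    (α β : ℝ → ℝ) (hα : ContDiff ℝ ∞ α) (hβ : ContDiff ℝ ∞ β)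
    (hα1 : ∀ t ∈ Icc a b, 0 < |α t| ∧ |α t| < π / 2)
    (hβ1 : ∀ t ∈ Icc a b, 0 < β t ∧ β t < π)
    (ξ : ℝ → E3)
    (hξ : ∀ t, ξ t = cos (β t) • e t +
      sin (β t) • (cos (α t) • n t + sin (α t) • bi t))
    (hdev : ∀ t ∈ Icc a b, ⟪cross3 (deriv c t) (ξ t), deriv ξ t⟫ = 0)
    (H : ℝ → ℝ)
    (hH : ∀ t, H t = ((-(κ t * sin (α t))) * 1 - 2 * 0 * cos (β t) + 0 * 1) /
      (2 * (1 * 1 - cos (β t) ^ 2))) :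
    ∀ t ∈ Icc a b,
      H t = -(κ t * sin (α t)) / (2 * sin (β t) ^ 2) ∧
      H t = -((κ t) ^ 2 * sin (α t) ^ 2 + (deriv α t + τ t) ^ 2) /
        (2 * κ t * sin (α t)) ∧
      H t ≠ 0 :=
  stmt4_general a b hab c hc harc κ hκ hκpos e n bi τ he hn hbi hτ α β hα hβ hα1 hβ1 ξ hξ hdev H hH
end
end

section
/- There exists ε > 0 such that the ruled strip f, restricted to Ω_ε := I × (−ε, ε), is injective (i.e. f gives an embedding of the strip for all sufficiently small ε). -/
noncomputable section
open Real Set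
open scoped ContDiff

local notation "⟪" x ", " y "⟫" => @inner ℝ _ _ x y

/-!
Along the directrix `v = 0` the strip map `F (t, v) = c t + v • ξ t` has strict derivative
`(h, u) ↦ h • c' t + u • ξ t`. This is injective: `c' t` is orthogonal to the principal normal
`n t` (since `‖c'‖ = 1`), while `ξ t` has normal component `sin β cos α ≠ 0`. Hence `F` is
injective near every point `(t, 0)`. It is also injective on the compact directrix `I × {0}`,
because `c` is, and a compactness argument plus the tube lemma upgrade this to injectivity on
some `I × (-ε, ε)`.
-/

open Filter Topology Function

theorem HasStrictFDerivAt.exists_mem_nhds_injOn {𝕜 E F : Type*} [NontriviallyNormedField 𝕜]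
    [CompleteSpace 𝕜] [NormedAddCommGroup E] [NormedSpace 𝕜 E] [FiniteDimensional 𝕜 E]
    [NormedAddCommGroup F] [NormedSpace 𝕜 F] {f : E → F} {L : E →L[𝕜] F} {x : E}
    (hf : HasStrictFDerivAt f L x) (hL : Injective L) : ∃ s ∈ 𝓝 x, InjOn f s := by
  -- `L` is `K`-antilipschitz, and near `x` the map `f - L` is `K⁻¹ / 2`-Lipschitz.
  obtain ⟨K, hK, hKL⟩ := (L : E →ₗ[𝕜] F).injective_iff_antilipschitz.1 hL
  obtain ⟨s, hs, hfs⟩ := hf.approximates_deriv_on_nhds (c := K⁻¹ / 2) (Or.inr (by positivity))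
  refine ⟨s, hs, injOn_iff_injective.2 ?_⟩
  have := (hKL.domRestrict s).add_lipschitzWith hfs.lipschitz_sub
    (NNReal.half_lt_self (inv_pos.2 hK).ne')
  convert this.injective with y
  simp

theorem IsCompact.exists_injOn_prod_Ioo {X Y : Type*} [TopologicalSpace X] [TopologicalSpace Y]
    [T2Space Y] {K : Set X} (hK : IsCompact K) {F : X × ℝ → Y} (hinj : InjOn (fun x => F (x, 0)) K)
    (hcont : ∀ x ∈ K, ContinuousAt F (x, 0)) (hloc : ∀ x ∈ K, ∃ U ∈ 𝓝 (x, 0), InjOn F U) :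
    ∃ ε > 0, InjOn F (K ×ˢ Ioo (-ε) ε) := by
  obtain ⟨s, hs, hFs⟩ : ∃ s ∈ 𝓝ˢ (K ×ˢ {0}), InjOn F s := by
    refine InjOn.exists_mem_nhdsSet ?_ (hK.prod isCompact_singleton) ?_ ?_
    · rintro ⟨x, _⟩ ⟨hx, rfl⟩ ⟨y, _⟩ ⟨hy, rfl⟩ h
      rw [show x = y from hinj hx hy h]
    · rintro ⟨x, _⟩ ⟨hx, rfl⟩
      exact hcont x hx
    · rintro ⟨x, _⟩ ⟨hx, rfl⟩
      exact hloc x hx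
  rw [hK.nhdsSet_prod_eq isCompact_singleton, nhdsSet_singleton] at hs
  obtain ⟨U, hU, V, hV, hUV⟩ := mem_prod_iff.1 hs
  obtain ⟨ε, hε, hεV⟩ := Metric.mem_nhds_iff.1 hV
  refine ⟨ε, hε, hFs.mono (Subset.trans (prod_mono (subset_of_mem_nhdsSet hU) ?_) hUV)⟩
  rwa [Real.ball_eq_Ioo, zero_sub, zero_add] at hεV

def ruledMap {E : Type*} [AddCommGroup E] [Module ℝ E] (c ξ : ℝ → E) (p : ℝ × ℝ) : E :=
  c p.1 + p.2 • ξ p.1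

theorem hasStrictFDerivAt_ruledMap {E : Type*} [NormedAddCommGroup E] [NormedSpace ℝ E]
    {c ξ : ℝ → E} {c' ξ' : E} {t : ℝ} (hc : HasStrictDerivAt c c' t)
    (hξ : HasStrictDerivAt ξ ξ' t) :
    HasStrictFDerivAt (ruledMap c ξ)
      ((ContinuousLinearMap.fst ℝ ℝ ℝ).smulRight c' +
        (ContinuousLinearMap.snd ℝ ℝ ℝ).smulRight (ξ t)) (t, 0) := by
  have h : HasStrictFDerivAt (fun p : ℝ × ℝ => c p.1 + p.2 • ξ p.1) _ (t, 0) :=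
    (hc.hasStrictFDerivAt.comp (t, 0) hasStrictFDerivAt_fst).add
      (hasStrictFDerivAt_snd.smul (hξ.hasStrictFDerivAt.comp (t, 0) hasStrictFDerivAt_fst))
  exact h.congr_fderiv (by ext <;> simp)

theorem injective_fst_smulRight_add_snd_smulRight {E : Type*} [NormedAddCommGroup E]
    [NormedSpace ℝ E] {v w : E} (h : LinearIndependent ℝ ![v, w]) :
    Injective ((ContinuousLinearMap.fst ℝ ℝ ℝ).smulRight v +
      (ContinuousLinearMap.snd ℝ ℝ ℝ).smulRight w) := by
  refine (injective_iff_map_eq_zero _).2 fun ⟨s, t⟩ hst => ?_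
  obtain ⟨rfl, rfl⟩ := LinearIndependent.pair_iff.1 h s t (by simpa using hst)
  rfl

theorem linearIndependent_pair_of_inner {F : Type*} [NormedAddCommGroup F]
    [InnerProductSpace ℝ F] {v w u : F} (hv : v ≠ 0) (hvu : ⟪v, u⟫ = 0) (hwu : ⟪w, u⟫ ≠ 0) :
    LinearIndependent ℝ ![v, w] := by
  refine LinearIndependent.pair_iff.2 fun s t hst => ?_
  have ht : t = 0 := by
    have := congrArg (⟪·, u⟫) hst
    simp only [inner_add_left, real_inner_smul_left, hvu, inner_zero_left] at this
    simpa [hwu] using this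
  subst ht
  simpa [hv] using hst

theorem inner_deriv_eq_zero_of_norm_eqOn {F : Type*} [NormedAddCommGroup F]
    [InnerProductSpace ℝ F] {γ : ℝ → F} {s : Set ℝ} {t r : ℝ} (hγ : DifferentiableAt ℝ γ t)
    (hs : UniqueDiffWithinAt ℝ s t) (ht : t ∈ s) (hr : ∀ u ∈ s, ‖γ u‖ = r) :
    ⟪γ t, deriv γ t⟫ = 0 := by
  have hconst : HasDerivWithinAt (‖γ ·‖ ^ 2) 0 s t :=
    (hasDerivWithinAt_const t s (r ^ 2)).congr (fun u hu => by rw [hr u hu]) (by rw [hr t ht])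
  have := hs.eq_deriv _ hγ.hasDerivAt.norm_sq.hasDerivWithinAt hconst
  simpa using this

theorem inner_cross3_right_eq_zero (u v : E3) : ⟪cross3 u v, v⟫ = 0 := by
  simp [cross3, PiLp.inner_apply, Fin.sum_univ_three, WithLp.equiv_symm_apply]
  ring

theorem contDiff_cross3 : ContDiff ℝ ∞ (fun p : E3 × E3 => cross3 p.1 p.2) := by
  refine (EuclideanSpace.equiv (Fin 3) ℝ).symm.contDiff.comp (contDiff_pi.2 fun i => ?_)
  fin_cases i <;> simp <;> fun_prop

def principalNormal (c : ℝ → E3) (t : ℝ) : E3 :=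
  ‖deriv (deriv c) t‖⁻¹ • deriv (deriv c) t

def ruling (c : ℝ → E3) (α β : ℝ → ℝ) (t : ℝ) : E3 :=
  cos (β t) • deriv c t + sin (β t) •
    (cos (α t) • principalNormal c t + sin (α t) • cross3 (deriv c t) (principalNormal c t))

section Frame

variable {c : ℝ → E3} {α β : ℝ → ℝ} {t : ℝ}

theorem inner_ruling_principalNormal (horth : ⟪deriv c t, deriv (deriv c) t⟫ = 0)
    (hc₂ : deriv (deriv c) t ≠ 0) :
    ⟪ruling c α β t, principalNormal c t⟫ = sin (β t) * cos (α t) := by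
  have hTN : ⟪deriv c t, principalNormal c t⟫ = 0 := by
    rw [principalNormal, real_inner_smul_right, horth, mul_zero]
  have hNN : ⟪principalNormal c t, principalNormal c t⟫ = 1 := by
    rw [real_inner_self_eq_norm_sq, principalNormal, norm_smul, norm_inv, norm_norm,
      inv_mul_cancel₀ (norm_ne_zero_iff.2 hc₂), one_pow]
  simp only [ruling, inner_add_left, real_inner_smul_left, hTN, hNN,
    inner_cross3_right_eq_zero]
  ring

theorem linearIndependent_deriv_ruling (hc₁ : deriv c t ≠ 0)
    (horth : ⟪deriv c t, deriv (deriv c) t⟫ = 0) (hc₂ : deriv (deriv c) t ≠ 0)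
    (hα : cos (α t) ≠ 0) (hβ : sin (β t) ≠ 0) :
    LinearIndependent ℝ ![deriv c t, ruling c α β t] := by
  refine linearIndependent_pair_of_inner hc₁ (u := principalNormal c t) ?_ ?_
  · rw [principalNormal, real_inner_smul_right, horth, mul_zero]
  · rw [inner_ruling_principalNormal horth hc₂]
    exact mul_ne_zero hβ hα

theorem contDiffAt_ruling (hc : ContDiff ℝ ∞ c) (hα : ContDiff ℝ ∞ α) (hβ : ContDiff ℝ ∞ β)
    (hc₂ : deriv (deriv c) t ≠ 0) : ContDiffAt ℝ ∞ (ruling c α β) t := by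
  have hT : ContDiff ℝ ∞ (deriv c) := (contDiff_infty_iff_deriv.1 hc).2
  have hT' : ContDiff ℝ ∞ (deriv (deriv c)) := (contDiff_infty_iff_deriv.1 hT).2
  have hN : ContDiffAt ℝ ∞ (principalNormal c) t :=
    ((hT'.contDiffAt.norm ℝ hc₂).inv (norm_ne_zero_iff.2 hc₂)).smul hT'.contDiffAt
  have hB : ContDiffAt ℝ ∞ (fun s => cross3 (deriv c s) (principalNormal c s)) t :=
    contDiff_cross3.contDiffAt.comp t (hT.contDiffAt.prodMk hN)
  exact (hβ.contDiffAt.cos.smul hT.contDiffAt).add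
    (hβ.contDiffAt.sin.smul ((hα.contDiffAt.cos.smul hN).add (hα.contDiffAt.sin.smul hB)))

end Frame

theorem stmt5_general (a b : ℝ) (hab : a < b)
    (c : ℝ → E3) (hc : ContDiff ℝ ∞ c) (hinj : InjOn c (Icc a b))
    (harc : ∀ t ∈ Icc a b, ‖deriv c t‖ = 1)
    (κ : ℝ → ℝ) (hκ : ∀ t, κ t = ‖deriv (deriv c) t‖)
    (hκpos : ∀ t ∈ Icc a b, 0 < κ t)
    (e n bi : ℝ → E3)
    (he : ∀ t, e t = deriv c t)
    (hn : ∀ t, n t = (κ t)⁻¹ • deriv (deriv c) t)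
    (hbi : ∀ t, bi t = cross3 (e t) (n t))
    (α β : ℝ → ℝ) (hα : ContDiff ℝ ∞ α) (hβ : ContDiff ℝ ∞ β)
    (hα1 : ∀ t ∈ Icc a b, 0 < |α t| ∧ |α t| < π / 2)
    (hβ1 : ∀ t ∈ Icc a b, 0 < β t ∧ β t < π)
    (ξ : ℝ → E3)
    (hξ : ∀ t, ξ t = cos (β t) • e t +
      sin (β t) • (cos (α t) • n t + sin (α t) • bi t)) :
    ∃ ε > (0 : ℝ),
      InjOn (fun p : ℝ × ℝ => c p.1 + p.2 • ξ p.1) (Icc a b ×ˢ Ioo (-ε) ε) := by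
  obtain rfl : ξ = ruling c α β := funext fun t => by
    rw [hξ, hbi, he, hn, hκ]
    rfl
  have hc₁ : ∀ t ∈ Icc a b, deriv c t ≠ 0 := fun t ht =>
    norm_ne_zero_iff.1 (by rw [harc t ht]; exact one_ne_zero)
  have hc₂ : ∀ t ∈ Icc a b, deriv (deriv c) t ≠ 0 := fun t ht =>
    norm_pos_iff.1 (hκ t ▸ hκpos t ht)
  have horth : ∀ t ∈ Icc a b, ⟪deriv c t, deriv (deriv c) t⟫ = 0 := fun t ht =>
    inner_deriv_eq_zero_of_norm_eqOn
      (((contDiff_infty_iff_deriv.1 hc).2.differentiable (by simp)) t)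
      (uniqueDiffOn_Icc hab t ht) ht harc
  have hF : ∀ t ∈ Icc a b, HasStrictFDerivAt (ruledMap c (ruling c α β))
      ((ContinuousLinearMap.fst ℝ ℝ ℝ).smulRight (deriv c t) +
        (ContinuousLinearMap.snd ℝ ℝ ℝ).smulRight (ruling c α β t)) (t, 0) := fun t ht =>
    hasStrictFDerivAt_ruledMap (hc.contDiffAt.hasStrictDerivAt (by simp))
      ((contDiffAt_ruling hc hα hβ (hc₂ t ht)).hasStrictDerivAt (by simp))
  refine isCompact_Icc.exists_injOn_prod_Ioo (by simpa [ruledMap] using hinj)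
    (fun t ht => (hF t ht).continuousAt) fun t ht => (hF t ht).exists_mem_nhds_injOn ?_
  refine injective_fst_smulRight_add_snd_smulRight
    (linearIndependent_deriv_ruling (hc₁ t ht) (horth t ht) (hc₂ t ht) ?_ ?_)
  · exact (cos_pos_of_mem_Ioo (abs_lt.1 (hα1 t ht).2)).ne'
  · exact (sin_pos_of_pos_of_lt_pi (hβ1 t ht).1 (hβ1 t ht).2).ne'

/-- for sufficiently small `ε > 0`, the ruled strip
`f(t,v) = c(t) + v ξ(t)` is injective on `Ω_ε = I × (-ε, ε)`. -/
theorem stmt5 (a b : ℝ) (hab : a < b)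
    (c : ℝ → E3) (hc : ContDiff ℝ ∞ c) (hinj : InjOn c (Icc a b))
    (harc : ∀ t ∈ Icc a b, ‖deriv c t‖ = 1)
    (κ : ℝ → ℝ) (hκ : ∀ t, κ t = ‖deriv (deriv c) t‖)
    (hκpos : ∀ t ∈ Icc a b, 0 < κ t)
    (e n bi : ℝ → E3) (τ : ℝ → ℝ)
    (he : ∀ t, e t = deriv c t)
    (hn : ∀ t, n t = (κ t)⁻¹ • deriv (deriv c) t)
    (hbi : ∀ t, bi t = cross3 (e t) (n t))
    (hτ : ∀ t, τ t = ⟪deriv n t, bi t⟫)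
    (α β : ℝ → ℝ) (hα : ContDiff ℝ ∞ α) (hβ : ContDiff ℝ ∞ β)
    (hα1 : ∀ t ∈ Icc a b, 0 < |α t| ∧ |α t| < π / 2)
    (hβ1 : ∀ t ∈ Icc a b, 0 < β t ∧ β t < π)
    (ξ : ℝ → E3)
    (hξ : ∀ t, ξ t = cos (β t) • e t +
      sin (β t) • (cos (α t) • n t + sin (α t) • bi t)) :
    ∃ ε > (0 : ℝ),
      InjOn (fun p : ℝ × ℝ => c p.1 + p.2 • ξ p.1) (Icc a b ×ˢ Ioo (-ε) ε) :=
  stmt5_general a b hab c hc hinj harc κ hκ hκpos e n bi he hn hbi α β hα hβ hα1 hβ1 ξ hξ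
end
end
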